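/- Let G be a graph and let G' be the graph obtained from two disjoint copies of G by adding all possible edges between the two copies (the join of G with itself). Then the tree-independence number of G' equals the independence number of G. -/

import Mathlib

open SimpleGraph

/-- `S` is an independent set in `G`. -/
def IsIndepOn {V : Type} (G : SimpleGraph V) (S : Set V) : Prop :=
  S.Pairwise fun u v => ¬ G.Adj u v

/-- The independence number of `G`. -/
noncomputable def indepNum {V : Type} (G : SimpleGraph V) : ℕ :=
  sSup {n | ∃ S : Set V, IsIndepOn G S ∧ S.ncard = n}

/-- The clique number of `G`. -/
noncomputable def cliqueNumber {V : Type} (G : SimpleGraph V) : ℕ :=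
  sSup {n | ∃ S : Set V, G.IsClique S ∧ S.ncard = n}

/-- A tree decomposition of a graph `G`. -/
structure TreeDecomp {V : Type} (G : SimpleGraph V) where
  ι : Type
  tree : SimpleGraph ι
  tree_isTree : tree.IsTree
  bag : ι → Set V
  mem_bag : ∀ v : V, ∃ t, v ∈ bag t
  edge_bag : ∀ ⦃u v : V⦄, G.Adj u v → ∃ t, u ∈ bag t ∧ v ∈ bag t
  bag_connected : ∀ v : V, (tree.induce {t | v ∈ bag t}).Connected

/-- The independence number of a family of bags: the maximum independence number
of a subgraph of `G` induced by some bag. -/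
noncomputable def bagAlpha {V : Type} (G : SimpleGraph V) {ι : Type} (bag : ι → Set V) : ℕ :=
  sSup {n | ∃ t, ∃ S : Set V, S ⊆ bag t ∧ IsIndepOn G S ∧ S.ncard = n}

/-- The independence number of a tree decomposition. -/
noncomputable def tdAlpha {V : Type} {G : SimpleGraph V} (td : TreeDecomp G) : ℕ :=
  bagAlpha G td.bag

/-- The width of a tree decomposition: maximum bag size minus one. -/
noncomputable def tdWidth {V : Type} {G : SimpleGraph V} (td : TreeDecomp G) : ℕ :=
  sSup {n | ∃ t, (td.bag t).ncard = n} - 1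

/-- The treewidth of `G`. -/
noncomputable def treewidth {V : Type} (G : SimpleGraph V) : ℕ :=
  sInf {w | ∃ td : TreeDecomp G, tdWidth td = w}

/-- The tree-independence number of `G`. -/
noncomputable def treeIndepNum {V : Type} (G : SimpleGraph V) : ℕ :=
  sInf {k | ∃ td : TreeDecomp G, tdAlpha td = k}

/-- A graph is chordal if it has no induced cycle of length at least four. -/
def Chordal {V : Type} (G : SimpleGraph V) : Prop :=
  ∀ n : ℕ, 4 ≤ n → IsEmpty (cycleGraph n ↪g G)

/-- The join of `G` with a disjoint copy of itself: two disjoint copies of `G`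
with all possible edges between the copies. -/
def joinSelf {V : Type} (G : SimpleGraph V) : SimpleGraph (V ⊕ V) :=
  SimpleGraph.fromRel fun x y =>
    match x, y with
    | .inl a, .inl b => G.Adj a b
    | .inr a, .inr b => G.Adj a b
    | _, _ => True


/-!
An independent set of the join lies inside one copy of `G`, so the decomposition with a single
bag already has independence number `α(G)`. Conversely, every tree decomposition has a bag
containing the closed neighbourhood of some vertex, and in the join that neighbourhood contains
the whole other copy of `G`, hence an independent set of size `α(G)`.
-/

namespace SimpleGraph

variable {ι : Type*} {T : SimpleGraph ι}

lemma IsAcyclic.length_eq_dist_of_isPath (hT : T.IsAcyclic) {a b : ι} {p : T.Walk a b}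
    (hp : p.IsPath) : p.length = T.dist a b := by
  obtain ⟨q, hq, hlen⟩ := p.reachable.exists_path_of_dist
  rw [← hlen, Subtype.mk.inj ((hT.subsingleton_path a b).elim ⟨p, hp⟩ ⟨q, hq⟩)]

lemma IsAcyclic.dist_add_dist_of_mem_support (hT : T.IsAcyclic) {a b x : ι} {p : T.Walk a b}
    (hp : p.IsPath) (hx : x ∈ p.support) : T.dist a x + T.dist x b = T.dist a b := by
  obtain ⟨q, r, hq, hr, rfl⟩ := hp.mem_support_iff_exists_append.mp hx
  rw [← hT.length_eq_dist_of_isPath hq, ← hT.length_eq_dist_of_isPath hr,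
    ← hT.length_eq_dist_of_isPath hp, Walk.length_append]

lemma Connected.exists_isPath_of_induce {C : Set ι} (hC : (T.induce C).Connected) {a b : ι}
    (ha : a ∈ C) (hb : b ∈ C) :
    ∃ p : T.Walk a b, p.IsPath ∧ ∀ x ∈ p.support, x ∈ C := by
  classical
  obtain ⟨w⟩ := hC ⟨a, ha⟩ ⟨b, hb⟩
  have hw : ∀ x ∈ (w.map (Embedding.induce C).toHom).support, x ∈ C := by
    simp only [Walk.support_map, List.mem_map]
    rintro _ ⟨y, -, rfl⟩
    exact y.2
  exact ⟨_, Walk.bypass_isPath _, fun x hx => hw x (Walk.support_bypass_subset_support _ hx)⟩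

lemma IsAcyclic.mem_of_mem_support_of_connected_induce (hT : T.IsAcyclic) {C : Set ι}
    (hC : (T.induce C).Connected) {a b : ι} (ha : a ∈ C) (hb : b ∈ C) {p : T.Walk a b}
    (hp : p.IsPath) {x : ι} (hx : x ∈ p.support) : x ∈ C := by
  obtain ⟨q, hq, hqC⟩ := hC.exists_isPath_of_induce ha hb
  rw [Subtype.mk.inj ((hT.subsingleton_path a b).elim ⟨p, hp⟩ ⟨q, hq⟩)] at hx
  exact hqC x hx

lemma IsAcyclic.mem_support_of_forall_dist_le (hT : T.IsAcyclic) {C : Set ι}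
    (hC : (T.induce C).Connected) {r t₀ c : ι} (ht₀ : t₀ ∈ C) (hc : c ∈ C)
    (hmin : ∀ t ∈ C, T.dist r t₀ ≤ T.dist r t) {π : T.Walk r c} (hπ : π.IsPath) :
    t₀ ∈ π.support := by
  classical
  obtain ⟨q, -, hqC⟩ := hC.exists_isPath_of_induce hc ht₀
  clear hC hc ht₀
  induction q with
  | nil => exact π.end_mem_support
  | @cons s s' t₀ hadj q ih =>
    have hq : ∀ x ∈ q.support, x ∈ C := fun x hx => hqC x (by simp [hx])
    by_cases hs' : s' ∈ π.support
    · exact π.support_takeUntil_subset_support hs' (ih hmin (hπ.takeUntil hs') hq)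
    · have hπ' := hπ.concat hs' hadj
      have ht₀' := ih hmin hπ' hq
      simp only [Walk.support_concat, List.mem_append, List.mem_singleton] at ht₀'
      refine ht₀'.resolve_right ?_
      rintro rfl
      have hlen := hT.length_eq_dist_of_isPath hπ'
      rw [Walk.length_concat, hT.length_eq_dist_of_isPath hπ] at hlen
      have := hmin s (hqC s (by simp))
      omega

end SimpleGraph

/-- Root the tree anywhere and give each vertex `w` the bag closest to the root containing it;
a vertex `v` whose such bag lies deepest works, because any neighbour `u` of `v` has a bag in
common with `v`, and the path to it from the root passes first through the top bag of `u`,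
then through that of `v`. -/
theorem TreeDecomp.exists_insert_neighborSet_subset_bag {W : Type} [Finite W] [Nonempty W]
    {H : SimpleGraph W} (td : TreeDecomp H) :
    ∃ v t, insert v (H.neighborSet v) ⊆ td.bag t := by
  classical
  have hT := td.tree_isTree
  obtain ⟨r⟩ := hT.connected.nonempty
  have htop (w : W) : ∃ t, w ∈ td.bag t ∧
      ∀ t', w ∈ td.bag t' → td.tree.dist r t ≤ td.tree.dist r t' :=
    ⟨_, Function.argminOn_mem (td.tree.dist r) {t | w ∈ td.bag t} (td.mem_bag w),
      fun t' ht' => Function.argminOn_le (td.tree.dist r) {t | w ∈ td.bag t} (a := t') ht'⟩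
  choose top hw_top htop using htop
  obtain ⟨v, hv⟩ := Finite.exists_max fun w => td.tree.dist r (top w)
  refine ⟨v, top v, Set.insert_subset (hw_top v) fun u huv => ?_⟩
  obtain ⟨s, hvs, hus⟩ := td.edge_bag huv
  obtain ⟨π, hπ, -⟩ := (hT.connected r s).exists_path_of_dist
  have hu_π := hT.isAcyclic.mem_support_of_forall_dist_le (td.bag_connected u) (hw_top u) hus
    (htop u) hπ
  have hv_π := hT.isAcyclic.mem_support_of_forall_dist_le (td.bag_connected v) (hw_top v) hvs
    (htop v) hπ
  obtain ⟨π₀, π₁, hπ₀, hπ₁, rfl⟩ := hπ.mem_support_iff_exists_append.mp hu_π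
  have hv_π₁ : top v ∈ π₁.support := by
    rcases (π₀.mem_support_append_iff π₁).mp hv_π with hv_π₀ | hv_π₁
    · have hsplit := hT.isAcyclic.dist_add_dist_of_mem_support hπ₀ hv_π₀
      have hzero : td.tree.dist (top v) (top u) = 0 := by have := hv u; omega
      rw [(hT.connected _ _).dist_eq_zero_iff.mp hzero]
      exact π₁.start_mem_support
    · exact hv_π₁
  exact hT.isAcyclic.mem_of_mem_support_of_connected_induce (td.bag_connected u) (hw_top u) hus
    hπ₁ hv_π₁

lemma exists_isIndepOn_ncard_eq_indepNum {V : Type} [Finite V] (G : SimpleGraph V) :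
    ∃ S, IsIndepOn G S ∧ S.ncard = _root_.indepNum G :=
  Nat.sSup_mem (s := {n | ∃ S : Set V, IsIndepOn G S ∧ S.ncard = n})
    ⟨0, ∅, Set.pairwise_empty _, Set.ncard_empty V⟩
    ⟨Nat.card V, by rintro _ ⟨S, -, rfl⟩; exact S.ncard_le_card⟩

lemma ncard_le_bagAlpha {V : Type} [Finite V] {G : SimpleGraph V} {ι : Type} {bag : ι → Set V}
    {t : ι} {S : Set V} (hSt : S ⊆ bag t) (hS : IsIndepOn G S) : S.ncard ≤ bagAlpha G bag :=
  le_csSup ⟨Nat.card V, by rintro _ ⟨-, S, -, -, rfl⟩; exact S.ncard_le_card⟩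
    ⟨t, S, hSt, hS, rfl⟩

def TreeDecomp.single {V : Type} (G : SimpleGraph V) : TreeDecomp G where
  ι := Unit
  tree := ⊥
  tree_isTree := .of_subsingleton
  bag _ := Set.univ
  mem_bag _ := ⟨(), trivial⟩
  edge_bag _ _ _ := ⟨(), trivial, trivial⟩
  bag_connected _ := (@IsTree.of_subsingleton _ ⟨⟨(), trivial⟩⟩ _ _).connected

lemma tdAlpha_single {V : Type} (G : SimpleGraph V) :
    tdAlpha (TreeDecomp.single G) = _root_.indepNum G := by
  simp [tdAlpha, bagAlpha, _root_.indepNum, TreeDecomp.single]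

lemma treeIndepNum_le_indepNum {V : Type} (G : SimpleGraph V) :
    treeIndepNum G ≤ _root_.indepNum G :=
  Nat.sInf_le ⟨_, tdAlpha_single G⟩

section Join

variable {V : Type} {G : SimpleGraph V}

@[simp]
lemma joinSelf_adj_inl_inl {a b : V} : (joinSelf G).Adj (.inl a) (.inl b) ↔ G.Adj a b := by
  simp +contextual [joinSelf, G.adj_comm, G.ne_of_adj]

@[simp]
lemma joinSelf_adj_inr_inr {a b : V} : (joinSelf G).Adj (.inr a) (.inr b) ↔ G.Adj a b := by
  simp +contextual [joinSelf, G.adj_comm, G.ne_of_adj]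

@[simp]
lemma joinSelf_adj_inl_inr {a b : V} : (joinSelf G).Adj (.inl a) (.inr b) := by
  simp [joinSelf]

@[simp]
lemma joinSelf_adj_inr_inl {a b : V} : (joinSelf G).Adj (.inr a) (.inl b) := by
  simp [joinSelf]

lemma isIndepOn_joinSelf_image_inl_iff {S : Set V} :
    IsIndepOn (joinSelf G) (Sum.inl '' S) ↔ IsIndepOn G S := by
  simp [IsIndepOn, Set.Pairwise]

lemma isIndepOn_joinSelf_image_inr_iff {S : Set V} :
    IsIndepOn (joinSelf G) (Sum.inr '' S) ↔ IsIndepOn G S := by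
  simp [IsIndepOn, Set.Pairwise]

lemma IsIndepOn.subset_range_inl_or_subset_range_inr {S : Set (V ⊕ V)}
    (hS : IsIndepOn (joinSelf G) S) : S ⊆ Set.range Sum.inl ∨ S ⊆ Set.range Sum.inr := by
  by_contra! h
  obtain ⟨⟨x, hx, hx_inl⟩, ⟨y, hy, hy_inr⟩⟩ :=
    And.imp Set.not_subset.mp Set.not_subset.mp h
  rcases x with a | a
  · exact hx_inl ⟨a, rfl⟩
  rcases y with b | b
  · exact hS hx hy (by simp) (by simp)
  · exact hy_inr ⟨b, rfl⟩

lemma indepNum_joinSelf : _root_.indepNum (joinSelf G) = _root_.indepNum G := by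
  unfold _root_.indepNum
  congr 1
  ext n
  constructor
  · rintro ⟨S, hS, rfl⟩
    rcases hS.subset_range_inl_or_subset_range_inr with h | h <;>
      obtain ⟨A, rfl⟩ := Set.subset_range_iff_exists_image_eq.mp h
    · exact ⟨A, isIndepOn_joinSelf_image_inl_iff.mp hS,
        (Set.ncard_image_of_injective A Sum.inl_injective).symm⟩
    · exact ⟨A, isIndepOn_joinSelf_image_inr_iff.mp hS,
        (Set.ncard_image_of_injective A Sum.inr_injective).symm⟩
  · rintro ⟨S, hS, rfl⟩
    exact ⟨Sum.inl '' S, isIndepOn_joinSelf_image_inl_iff.mpr hS,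
      Set.ncard_image_of_injective S Sum.inl_injective⟩

lemma indepNum_le_tdAlpha_joinSelf [Finite V] (td : TreeDecomp (joinSelf G)) :
    _root_.indepNum G ≤ tdAlpha td := by
  obtain ⟨S, hS, hS_card⟩ := exists_isIndepOn_ncard_eq_indepNum G
  rcases S.eq_empty_or_nonempty with rfl | ⟨a, -⟩
  · simp [← hS_card]
  have : Nonempty (V ⊕ V) := ⟨.inl a⟩
  obtain ⟨v, t, hvt⟩ := td.exists_insert_neighborSet_subset_bag
  rw [← hS_card]
  rcases v with b | b
  · calc S.ncard = (Sum.inr '' S).ncard := (S.ncard_image_of_injective Sum.inr_injective).symm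
      _ ≤ tdAlpha td := ncard_le_bagAlpha (t := t)
          (by rintro _ ⟨x, -, rfl⟩; exact hvt (by simp))
          (isIndepOn_joinSelf_image_inr_iff.mpr hS)
  · calc S.ncard = (Sum.inl '' S).ncard := (S.ncard_image_of_injective Sum.inl_injective).symm
      _ ≤ tdAlpha td := ncard_le_bagAlpha (t := t)
          (by rintro _ ⟨x, -, rfl⟩; exact hvt (by simp))
          (isIndepOn_joinSelf_image_inl_iff.mpr hS)

end Join

theorem stmt4 {V : Type} [Fintype V] (G : SimpleGraph V) :
    treeIndepNum (joinSelf G) = _root_.indepNum G :=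
  le_antisymm ((treeIndepNum_le_indepNum _).trans indepNum_joinSelf.le)
    (le_csInf ⟨_, TreeDecomp.single _, rfl⟩ fun _ ⟨td, htd⟩ =>
      htd ▸ indepNum_le_tdAlpha_joinSelf td)
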